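/- arXiv:1601.06589 — 2 statements merged into one kernel-verified Lean document; each statement's English description precedes it below -/
import Mathlib

section
/- If 0 ≤ c < 2√(g'(0)), then the invasion state p₊ᶜ is the unique positive bounded stationary solution of the moving-frame equation; in particular there exists no ground state, i.e. no positive bounded stationary solution p with lim_{z→±∞} p(z) = 0. -/
/-!
On `z ≤ 0` the equation is linear, `q'' + c q' = q`, and boundedness forces
`q z = q 0 * exp (μ z)` with `μ > 0` the positive root of `μ² + c μ = 1`. On `z > 0`, `q'` cannot
vanish: at a first critical point `z₁` we have `q'' = -g(q) ≤ 0`, so `q z₁ ≤ 1`; the value `1` is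
excluded by uniqueness for the ODE, and below `1` the solution would turn down and decay to `0`,
which `c² < 4 g'(0)` forbids because the linearisation at `0` oscillates. So every positive
solution increases from `0` to `1`.

Two such solutions `q`, `p` with `q 0 ≤ p 0` then share their trajectory in the phase plane on
`z ≥ 0`: writing `p = q ∘ σ`, the gap `q' ∘ σ - p'` solves a linear equation with a nonnegative
coefficient and vanishes at `+∞`, hence everywhere. So `σ` is a shift, and the shift is `0`
because `q' / q` decreases strictly on `[0, ∞)` while both solutions start with `q' / q = μ`.
-/

open Filter Topology MeasureTheory Set

noncomputable section

/-- `g : ℝ → ℝ` is a monostable nonlinearity: it is of class `C¹` with locally Hölder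
continuous derivative, `g 0 = g 1 = 0`, `g > 0` on `(0,1)`, `g < 0` outside `[0,1]`,
and `g' 1 < 0 < g' 0`. -/
def Monostable (g : ℝ → ℝ) : Prop :=
  ContDiff ℝ 1 g ∧
  (∀ K : Set ℝ, IsCompact K → ∃ C r : NNReal, 0 < r ∧ r ≤ 1 ∧ HolderOnWith C r (deriv g) K) ∧
  g 0 = 0 ∧ g 1 = 0 ∧
  (∀ s : ℝ, 0 < s → s < 1 → 0 < g s) ∧
  (∀ s : ℝ, s ∉ Icc (0:ℝ) 1 → g s < 0) ∧
  deriv g 1 < 0 ∧ 0 < deriv g 0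

/-- The space-time heterogeneous reaction term in the moving frame:
`f(z,s) = -s` for `z < 0` and `f(z,s) = g(s)` for `z ≥ 0`. -/
def fshift (g : ℝ → ℝ) (z s : ℝ) : ℝ := if z < 0 then -s else g s

/-- A stationary solution (for speed `c`) of the moving-frame equation: a bounded `C¹`
function, twice differentiable away from `0`, with `p'' + c p' + f(z,p) = 0` for `z ≠ 0`. -/
def IsStationarySol (g : ℝ → ℝ) (c : ℝ) (p : ℝ → ℝ) : Prop :=
  (∃ M : ℝ, ∀ z, |p z| ≤ M) ∧
  ContDiff ℝ 1 p ∧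
  (∀ z : ℝ, z ≠ 0 → DifferentiableAt ℝ (deriv p) z) ∧
  (∀ z : ℝ, z ≠ 0 → deriv (deriv p) z + c * deriv p z + fshift g z (p z) = 0)

/-- The invasion state: a positive stationary solution connecting `0` at `-∞` to `1` at `+∞`. -/
def IsInvasionState (g : ℝ → ℝ) (c : ℝ) (p : ℝ → ℝ) : Prop :=
  IsStationarySol g c p ∧ (∀ z, 0 < p z) ∧
  Tendsto p atBot (nhds 0) ∧ Tendsto p atTop (nhds 1)

/-- A ground state: a positive stationary solution decaying to `0` at `±∞`. -/
def IsGroundState (g : ℝ → ℝ) (c : ℝ) (p : ℝ → ℝ) : Prop :=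
  IsStationarySol g c p ∧ (∀ z, 0 < p z) ∧
  Tendsto p atBot (nhds 0) ∧ Tendsto p atTop (nhds 0)

/-- `α*_c`: the supremum of `p 0` over all ground states `p` for speed `c`. -/
def alphaStar (g : ℝ → ℝ) (c : ℝ) : ℝ :=
  sSup { a : ℝ | ∃ p : ℝ → ℝ, IsGroundState g c p ∧ p 0 = a }

/-- `c` is an admissible wave speed for the homogeneous monostable equation:
there is a decreasing front `V` with `V'' + cV' + g(V) = 0`, `V(-∞) = 1`, `V(+∞) = 0`. -/
def IsWaveSpeed (g : ℝ → ℝ) (c : ℝ) : Prop :=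
  ∃ V : ℝ → ℝ, StrictAnti V ∧ ContDiff ℝ 1 V ∧
    (∀ z : ℝ, DifferentiableAt ℝ (deriv V) z) ∧
    (∀ z : ℝ, deriv (deriv V) z + c * deriv V z + g (V z) = 0) ∧
    Tendsto V atBot (nhds 1) ∧ Tendsto V atTop (nhds 0)

/-- The minimal wave speed `c*` of the homogeneous monostable equation. -/
def cstar (g : ℝ → ℝ) : ℝ := sInf { c : ℝ | IsWaveSpeed g c }

/-- `u` is the (bounded) solution of the moving-frame Cauchy problem
`∂ₜ u = ∂_zz u + c ∂_z u + f(z,u)` with initial datum `u₀`: it is bounded, `C¹` in `z`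
for each `t > 0`, satisfies the equation classically on `{z < 0}` and `{z > 0}`, and
attains the initial datum almost everywhere as `t → 0⁺`. -/
def IsSolution (g : ℝ → ℝ) (c : ℝ) (u₀ : ℝ → ℝ) (u : ℝ → ℝ → ℝ) : Prop :=
  (∀ z : ℝ, u 0 z = u₀ z) ∧
  (∃ M : ℝ, ∀ t z : ℝ, 0 < t → |u t z| ≤ M) ∧
  (∀ t : ℝ, 0 < t → ContDiff ℝ 1 (u t)) ∧
  (∀ t z : ℝ, 0 < t → z ≠ 0 → DifferentiableAt ℝ (deriv (u t)) z) ∧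
  (∀ t z : ℝ, 0 < t → z ≠ 0 →
    HasDerivAt (fun s => u s z)
      (deriv (deriv (u t)) z + c * deriv (u t) z + fshift g z (u t z)) t) ∧
  (∀ᵐ z : ℝ ∂volume, Tendsto (fun t => u t z) (nhdsWithin 0 (Ioi 0)) (nhds (u₀ z)))

section Calculus

variable {f f' : ℝ → ℝ}

theorem HasDerivAt.nonpos_of_nonneg_left {a x d : ℝ} (hf : HasDerivAt f d x) (hx : f x = 0)
    (hax : a < x) (hnonneg : ∀ y ∈ Ioo a x, 0 ≤ f y) : d ≤ 0 := by
  refine le_of_tendsto (hasDerivAt_iff_tendsto_slope_left_right.1 hf).1 ?_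
  filter_upwards [Ioo_mem_nhdsLT hax] with y hy
  rw [slope_def_field, hx, sub_zero]
  exact div_nonpos_of_nonneg_of_nonpos (hnonneg y hy) (by linarith [hy.2])

theorem HasDerivAt.eventually_neg_nhdsGT {x d : ℝ} (hf : HasDerivAt f d x) (hx : f x = 0)
    (hd : d < 0) : ∀ᶠ y in 𝓝[>] x, f y < 0 := by
  filter_upwards [(hasDerivAt_iff_tendsto_slope_left_right.1 hf).2.eventually_lt_const hd,
    self_mem_nhdsWithin] with y hy hxy
  rw [slope_def_field, hx, sub_zero] at hy
  exact neg_of_div_neg_left hy (sub_nonneg.2 (le_of_lt hxy))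

theorem exists_first_zero {φ : ℝ → ℝ} {a b : ℝ} (hφ : Continuous φ)
    (hpos : ∀ᶠ y in 𝓝[>] a, 0 < φ y) (hab : a < b) (hb : φ b ≤ 0) :
    ∃ z ∈ Ioc a b, φ z = 0 ∧ ∀ y ∈ Ioo a z, 0 < φ y := by
  obtain ⟨u, hau, hu⟩ := mem_nhdsGT_iff_exists_Ioo_subset.1 hpos
  obtain ⟨c, hac, hcub⟩ := exists_between (lt_min hau hab)
  obtain ⟨hcu, hcb⟩ := lt_min_iff.1 hcub
  set K := Icc c b ∩ {y | φ y ≤ 0}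
  have hK : IsCompact K := isCompact_Icc.inter_right (isClosed_le hφ continuous_const)
  have hzK : sInf K ∈ K := hK.sInf_mem ⟨b, ⟨hcb.le, le_rfl⟩, hb⟩
  have hbefore : ∀ y ∈ Ioo a (sInf K), 0 < φ y := by
    intro y hy
    by_contra! hφy
    have hyu : u ≤ y := not_lt.1 fun hyu => (hφy.trans_lt (hu ⟨hy.1, hyu⟩)).false
    have hyK : y ∈ K := ⟨⟨by linarith, hy.2.le.trans hzK.1.2⟩, hφy⟩
    exact (csInf_le hK.bddBelow hyK).not_gt hy.2
  have haz : a < sInf K := hac.trans_le hzK.1.1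
  have hafter : 0 ≤ φ (sInf K) := by
    refine ge_of_tendsto
      (hφ.continuousAt.tendsto.mono_left (nhdsWithin_le_nhds (s := Iio (sInf K)))) ?_
    filter_upwards [Ioo_mem_nhdsLT haz] with y hy using (hbefore y hy).le
  exact ⟨sInf K, ⟨haz, hzK.1.2⟩, le_antisymm hzK.2 hafter, hbefore⟩

theorem tendsto_atTop_of_le_deriv {r : ℝ} (hr : 0 < r)
    (hf : ∀ᶠ x in atTop, HasDerivAt f (f' x) x) (hle : ∀ᶠ x in atTop, r ≤ f' x) :
    Tendsto f atTop atTop := by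
  obtain ⟨a, ha⟩ := eventually_atTop.1 (hf.and hle)
  have hlin : ∀ x, a ≤ x → f a + r * (x - a) ≤ f x := by
    intro x hx
    have := (convex_Ici a).mul_sub_le_image_sub_of_le_deriv
      (fun y hy => (ha y hy).1.continuousAt.continuousWithinAt)
      (fun y hy => (ha y (interior_subset hy)).1.differentiableAt.differentiableWithinAt)
      (fun y hy => ((ha y (interior_subset hy)).1.deriv).symm ▸ (ha y (interior_subset hy)).2)
      a self_mem_Ici x hx hx
    linarith
  refine tendsto_atTop_mono' _ (eventually_atTop.2 ⟨a, hlin⟩) ?_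
  exact tendsto_atTop_add_const_left _ _
    ((tendsto_atTop_add_const_right _ (-a) tendsto_id).const_mul_atTop hr)

theorem eq_zero_of_tendsto_of_deriv2_add_mul_tendsto {f'' : ℝ → ℝ} {c L A : ℝ}
    (hf : ∀ᶠ x in atTop, HasDerivAt f (f' x) x) (hf' : ∀ᶠ x in atTop, HasDerivAt f' (f'' x) x)
    (hL : Tendsto f atTop (𝓝 L)) (hA : Tendsto (fun x => f'' x + c * f' x) atTop (𝓝 A)) :
    A = 0 := by
  wlog hA0 : 0 ≤ A generalizing f f' f'' L A
  · have := this (f := -f) (f' := -f') (f'' := -f'') (L := -L) (A := -A)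
      (hf.mono fun x h => h.neg) (hf'.mono fun x h => h.neg) hL.neg
      (by simpa [add_comm, mul_neg] using hA.neg) (by linarith)
    linarith
  refine hA0.antisymm' (not_lt.1 fun hApos => ?_)
  -- `f' + c f` has derivative tending to `A > 0`, so it grows linearly, hence so do `f'` and `f`
  have hF : Tendsto (fun x => f' x + c * f x) atTop atTop :=
    tendsto_atTop_of_le_deriv (half_pos hApos)
      ((hf.and hf').mono fun x h => h.2.add (h.1.const_mul c))
      (hA.eventually_const_le (half_lt_self hApos))
  have hf'top : Tendsto f' atTop atTop := by
    simpa using hF.atTop_add (hL.const_mul (-c))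
  exact not_tendsto_atTop_of_tendsto_nhds hL
    (tendsto_atTop_of_le_deriv one_pos hf (hf'top.eventually_ge_atTop 1))

theorem AntitoneOn.exists_tendsto_atTop {a : ℝ} (hf : AntitoneOn f (Ici a))
    (hb : BddBelow (f '' Ici a)) : ∃ L, Tendsto f atTop (𝓝 L) := by
  have hanti : Antitone fun x => f (max x a) := fun x y hxy =>
    hf (le_max_right x a) (le_max_right y a) (max_le_max_right a hxy)
  obtain ⟨m, hm⟩ := hb
  refine ⟨_, (tendsto_atTop_ciInf hanti ⟨m, ?_⟩).congr' ?_⟩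
  · rintro _ ⟨x, rfl⟩
    exact hm ⟨max x a, le_max_right x a, rfl⟩
  · filter_upwards [eventually_ge_atTop a] with x hx
    rw [max_eq_left hx]

theorem eq_mul_exp_of_hasDerivAt {k : ℝ} (hf : ContinuousOn f (Iic 0))
    (hd : ∀ z < 0, HasDerivAt f (k * f z) z) {z : ℝ} (hz : z ≤ 0) :
    f z = f 0 * Real.exp (k * z) := by
  have hconst := constant_of_has_deriv_right_zero (f := fun y => f y * Real.exp (-k * y))
    ((hf.mono Icc_subset_Iic_self).mul (by fun_prop)) (fun y hy => by
      have hexp := ((hasDerivAt_id' y).const_mul (-k)).exp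
      have := (hd y hy.2).mul hexp
      rw [show k * f y * Real.exp (-k * y) + f y * (Real.exp (-k * y) * (-k * 1)) = 0 by ring]
        at this
      exact this.hasDerivWithinAt) 0 (right_mem_Icc.2 hz)
  simp only [mul_zero, Real.exp_zero, mul_one] at hconst
  rw [hconst, mul_assoc, ← Real.exp_add]
  simp

theorem eq_zero_of_abs_mul_exp_le {a r B : ℝ} (hr : r < 0)
    (hB : ∀ y ≤ 0, |a * Real.exp (r * y)| ≤ B) : a = 0 := by
  by_contra ha
  have htop : Tendsto (fun y => |a| * Real.exp (r * y)) atBot atTop :=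
    (Real.tendsto_exp_atTop.comp (tendsto_id.const_mul_atBot_of_neg hr)).const_mul_atTop
      (abs_pos.2 ha)
  obtain ⟨y, hy, hy0⟩ := ((htop.eventually_gt_atTop B).and (eventually_le_atBot 0)).exists
  have := hB y hy0
  rw [abs_mul, abs_of_pos (Real.exp_pos _)] at this
  linarith

theorem not_eventually_pos_of_deriv2_le_neg_mul {w W W' : ℝ → ℝ} {δ : ℝ} (hδ : 0 < δ)
    (hw : ∀ᶠ z in atTop, HasDerivAt w (W z) z) (hW : ∀ᶠ z in atTop, HasDerivAt W (W' z) z)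
    (hW' : ∀ᶠ z in atTop, W' z ≤ -δ * w z) : ¬ ∀ᶠ z in atTop, 0 < w z := by
  intro hpos
  obtain ⟨a, ha⟩ := eventually_atTop.1 (hw.and (hW.and (hW'.and hpos)))
  have hWanti : AntitoneOn W (Ici a) :=
    antitoneOn_of_hasDerivWithinAt_nonpos (convex_Ici a)
      (fun x hx => (ha x hx).2.1.continuousAt.continuousWithinAt)
      (fun x hx => (ha x (interior_subset hx)).2.1.hasDerivWithinAt)
      (fun x hx => by
        obtain ⟨-, -, h, hw⟩ := ha x (interior_subset hx)
        nlinarith)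
  by_cases hneg : ∃ z₀ ≥ a, W z₀ < 0
  · -- `w` then decreases at least linearly
    obtain ⟨z₀, hz₀, hWz₀⟩ := hneg
    have htop : Tendsto (fun z => -w z) atTop atTop :=
      tendsto_atTop_of_le_deriv (neg_pos.2 hWz₀)
        ((eventually_ge_atTop a).mono fun z hz => (ha z hz).1.neg)
        ((eventually_ge_atTop z₀).mono fun z hz =>
          neg_le_neg (hWanti hz₀ (hz₀.trans hz) hz))
    obtain ⟨z, hz, hza⟩ := ((htop.eventually_ge_atTop 0).and (eventually_ge_atTop a)).exists
    linarith [(ha z hza).2.2.2]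
  · -- `w` is then nondecreasing, so `W` decreases at least linearly
    push Not at hneg
    have hwmono : MonotoneOn w (Ici a) :=
      monotoneOn_of_hasDerivWithinAt_nonneg (convex_Ici a)
        (fun x hx => (ha x hx).1.continuousAt.continuousWithinAt)
        (fun x hx => (ha x (interior_subset hx)).1.hasDerivWithinAt)
        (fun x hx => hneg x (interior_subset hx))
    have htop : Tendsto (fun z => -W z) atTop atTop :=
      tendsto_atTop_of_le_deriv (mul_pos hδ (ha a le_rfl).2.2.2)
        ((eventually_ge_atTop a).mono fun z hz => (ha z hz).2.1.neg)
        ((eventually_ge_atTop a).mono fun z hz => by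
          have := hwmono self_mem_Ici hz hz
          nlinarith [(ha z hz).2.2.1])
    obtain ⟨z, hz, hza⟩ := ((htop.eventually_gt_atTop 0).and (eventually_ge_atTop a)).exists
    linarith [hneg z hza]

theorem eq_zero_of_hasDerivAt_mul_self {h m : ℝ → ℝ} {z₀ : ℝ} (hm : ∀ z, z₀ < z → 0 ≤ m z)
    (hd : ∀ z, z₀ < z → HasDerivAt h (m z * h z) z) (hlim : Tendsto h atTop (𝓝 0))
    {z : ℝ} (hz : z₀ < z) : h z = 0 := by
  -- `h ^ 2` is nondecreasing on `(z₀, ∞)` and tends to `0`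
  have hmono : MonotoneOn (fun z => h z ^ 2) (Ioi z₀) :=
    monotoneOn_of_hasDerivWithinAt_nonneg (convex_Ioi z₀)
      (fun x hx => (hd x hx).continuousAt.pow 2 |>.continuousWithinAt)
      (fun x hx => ((hd x (interior_subset hx)).pow 2).hasDerivWithinAt)
      (fun x hx => by
        have := hm x (interior_subset hx)
        rw [Nat.cast_ofNat, show 2 - 1 = 1 from rfl, pow_one]
        nlinarith [mul_nonneg this (sq_nonneg (h x))])
  have hle : h z ^ 2 ≤ 0 := by
    refine ge_of_tendsto (by simpa using hlim.pow 2) ?_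
    filter_upwards [eventually_ge_atTop z] with x hx using hmono hz (hz.trans_le hx) hx
  exact pow_eq_zero_iff two_ne_zero |>.1 (le_antisymm hle (sq_nonneg _))

theorem StrictMono.exists_hasDerivAt_comp_eq {q q' p p' : ℝ → ℝ} {s : Set ℝ} (hq : StrictMono q)
    (hqd : ∀ x, HasDerivAt q (q' x) x) (hq' : ∀ x, q' x ≠ 0) (hs : IsOpen s) (hsq : s ⊆ range q)
    (hpd : ∀ z, HasDerivAt p (p' z) z) (hps : ∀ z, p z ∈ s) :
    ∃ σ : ℝ → ℝ, (∀ z, q (σ z) = p z) ∧ ∀ z, HasDerivAt σ (p' z / q' (σ z)) z := by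
  have hinv : ∀ y ∈ range q, q (Function.invFun q y) = y := fun y hy => Function.invFun_eq hy
  have hleft : Function.LeftInverse (Function.invFun q) q :=
    Function.leftInverse_invFun hq.injective
  have hcont : ∀ y ∈ s, ContinuousAt (Function.invFun q) y := by
    intro y hy
    refine continuousAt_of_monotoneOn_of_image_mem_nhds (s := range q) ?_
      (mem_of_superset (hs.mem_nhds hy) hsq)
      (mem_of_superset univ_mem fun x _ => ⟨q x, ⟨x, rfl⟩, hleft x⟩)
    rintro _ ⟨a, rfl⟩ _ ⟨b, rfl⟩ hab
    rw [hleft a, hleft b]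
    exact hq.le_iff_le.1 hab
  refine ⟨Function.invFun q ∘ p, fun z => hinv _ (hsq (hps z)), fun z => ?_⟩
  have hderiv := HasDerivAt.of_local_left_inverse (hcont _ (hps z)) (hqd _) (hq' _)
    (mem_of_superset (hs.mem_nhds (hps z)) fun y hy => hinv y (hsq hy))
  simpa [div_eq_inv_mul] using hderiv.comp z (hpd z)

end Calculus

namespace Monostable

variable {g : ℝ → ℝ}

theorem contDiff (hg : Monostable g) : ContDiff ℝ 1 g := hg.1

theorem map_zero (hg : Monostable g) : g 0 = 0 := hg.2.2.1

theorem map_one (hg : Monostable g) : g 1 = 0 := hg.2.2.2.1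

theorem pos_of_mem_Ioo (hg : Monostable g) {s : ℝ} (h0 : 0 < s) (h1 : s < 1) : 0 < g s :=
  hg.2.2.2.2.1 s h0 h1

theorem neg_of_one_lt (hg : Monostable g) {s : ℝ} (h1 : 1 < s) : g s < 0 :=
  hg.2.2.2.2.2.1 s fun hs => (hs.2.trans_lt h1).false

theorem eq_zero_or_eq_one (hg : Monostable g) {s : ℝ} (hs : 0 ≤ s) (hgs : g s = 0) :
    s = 0 ∨ s = 1 := by
  rcases hs.eq_or_lt with rfl | hs
  · exact Or.inl rfl
  rcases lt_trichotomy s 1 with h1 | rfl | h1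
  · exact absurd hgs (hg.pos_of_mem_Ioo hs h1).ne'
  · exact Or.inr rfl
  · exact absurd hgs (hg.neg_of_one_lt h1).ne

end Monostable

def leftRate (c : ℝ) : ℝ := (√(c ^ 2 + 4) - c) / 2

theorem leftRate_pos (c : ℝ) : 0 < leftRate c := by
  have := Real.sq_sqrt (by positivity : (0:ℝ) ≤ c ^ 2 + 4)
  unfold leftRate
  nlinarith [Real.sqrt_nonneg (c ^ 2 + 4)]

theorem leftRate_sq_add_mul (c : ℝ) : leftRate c ^ 2 + c * leftRate c = 1 := by
  have := Real.sq_sqrt (by positivity : (0:ℝ) ≤ c ^ 2 + 4)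
  unfold leftRate
  nlinarith

namespace IsStationarySol

variable {g : ℝ → ℝ} {c : ℝ} {q p : ℝ → ℝ}

theorem differentiable (hs : IsStationarySol g c q) : Differentiable ℝ q :=
  hs.2.1.differentiable one_ne_zero

theorem continuous (hs : IsStationarySol g c q) : Continuous q :=
  hs.differentiable.continuous

theorem hasDerivAt (hs : IsStationarySol g c q) (z : ℝ) : HasDerivAt q (deriv q z) z :=
  (hs.differentiable z).hasDerivAt

theorem continuous_deriv (hs : IsStationarySol g c q) : Continuous (deriv q) :=
  hs.2.1.continuous_deriv le_rfl

theorem hasDerivAt_deriv_of_pos (hs : IsStationarySol g c q) {z : ℝ} (hz : 0 < z) :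
    HasDerivAt (deriv q) (-(c * deriv q z) - g (q z)) z := by
  have heq := hs.2.2.2 z hz.ne'
  rw [fshift, if_neg hz.not_gt] at heq
  rw [show -(c * deriv q z) - g (q z) = deriv (deriv q) z by linarith]
  exact (hs.2.2.1 z hz.ne').hasDerivAt

theorem hasDerivAt_deriv_of_neg (hs : IsStationarySol g c q) {z : ℝ} (hz : z < 0) :
    HasDerivAt (deriv q) (q z - c * deriv q z) z := by
  have heq := hs.2.2.2 z hz.ne
  rw [fshift, if_pos hz] at heq
  rw [show q z - c * deriv q z = deriv (deriv q) z by linarith]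
  exact (hs.2.2.1 z hz.ne).hasDerivAt

/-- `q'' + c q' - q = (d/dz + c + l) (q' - l q)` when `l² + c l = 1`. -/
theorem hasDerivAt_deriv_sub_mul (hs : IsStationarySol g c q) {l : ℝ} (hl : l ^ 2 + c * l = 1)
    {z : ℝ} (hz : z < 0) :
    HasDerivAt (fun y => deriv q y - l * q y) ((-c - l) * (deriv q z - l * q z)) z := by
  have := (hs.hasDerivAt_deriv_of_neg hz).sub ((hs.hasDerivAt z).const_mul l)
  rw [show q z - c * deriv q z - l * deriv q z = (-c - l) * (deriv q z - l * q z) by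
    linear_combination (-q z) * hl] at this
  exact this

theorem deriv_eq_leftRate_mul (hs : IsStationarySol g c q) {z : ℝ} (hz : z ≤ 0) :
    deriv q z = leftRate c * q z := by
  set μ := leftRate c
  have hμ := leftRate_pos c
  have hμ1 := leftRate_sq_add_mul c
  obtain ⟨M, hM⟩ := hs.1
  have hcont (l : ℝ) : ContinuousOn (fun y => deriv q y - l * q y) (Iic 0) :=
    (hs.continuous_deriv.sub (continuous_const.mul hs.continuous)).continuousOn
  -- the roots of `X² + c X = 1` are `μ > 0` and `-c - μ < 0`
  have hu : ∀ y ≤ 0, deriv q y - (-c - μ) * q y =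
      (deriv q 0 - (-c - μ) * q 0) * Real.exp (μ * y) := fun y hy => by
    have := eq_mul_exp_of_hasDerivAt (hcont (-c - μ))
      (fun y hy => hs.hasDerivAt_deriv_sub_mul (by linear_combination hμ1) hy) hy
    rwa [sub_sub_cancel] at this
  have hv : ∀ y ≤ 0, deriv q y - μ * q y = (deriv q 0 - μ * q 0) * Real.exp ((-c - μ) * y) :=
    fun y hy => eq_mul_exp_of_hasDerivAt (hcont μ)
      (fun y hy => hs.hasDerivAt_deriv_sub_mul hμ1 hy) hy
  have hk : 0 < 2 * μ + c := by nlinarith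
  have hv0 : deriv q 0 - μ * q 0 = 0 := by
    refine eq_zero_of_abs_mul_exp_le (r := -c - μ)
      (B := |deriv q 0 - (-c - μ) * q 0| + (2 * μ + c) * M) (by nlinarith) fun y hy => ?_
    rw [← hv y hy, show deriv q y - μ * q y =
      (deriv q y - (-c - μ) * q y) - (2 * μ + c) * q y by ring, hu y hy]
    calc _ ≤ |(deriv q 0 - (-c - μ) * q 0) * Real.exp (μ * y)| + |(2 * μ + c) * q y| :=
          abs_sub _ _
      _ ≤ _ := by
        rw [abs_mul, abs_mul, abs_of_pos (Real.exp_pos _), abs_of_pos hk]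
        gcongr
        · exact mul_le_of_le_one_right (abs_nonneg _) (Real.exp_le_one_iff.2 (by nlinarith))
        · exact hM y
  linear_combination (hv z hz) + Real.exp ((-c - μ) * z) * hv0

theorem eq_mul_exp_leftRate (hs : IsStationarySol g c q) {z : ℝ} (hz : z ≤ 0) :
    q z = q 0 * Real.exp (leftRate c * z) :=
  eq_mul_exp_of_hasDerivAt hs.continuous.continuousOn
    (fun y hy => hs.deriv_eq_leftRate_mul hy.le ▸ hs.hasDerivAt y) hz

theorem tendsto_atBot_zero (hs : IsStationarySol g c q) : Tendsto q atBot (𝓝 0) := by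
  have h : Tendsto (fun z => q 0 * Real.exp (leftRate c * z)) atBot (𝓝 0) := by
    simpa using (Real.tendsto_exp_atBot.comp
      (tendsto_id.const_mul_atBot (leftRate_pos c))).const_mul (q 0)
  refine h.congr' ?_
  filter_upwards [eventually_le_atBot 0] with z hz using (hs.eq_mul_exp_leftRate hz).symm

theorem eq_of_eq_of_deriv_eq_zero (hg : ContDiff ℝ 1 g) (hs : IsStationarySol g c q)
    {s₀ a b : ℝ} (hgs : g s₀ = 0) (ha : 0 < a) (hab : a ≤ b) (hqb : q b = s₀)
    (hdb : deriv q b = 0) : q a = s₀ := by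
  set v : ℝ × ℝ → ℝ × ℝ := fun x => (x.2, -(c * x.2) - g x.1)
  have hv : ContDiff ℝ 1 v := contDiff_snd.prodMk
    (((contDiff_const.mul contDiff_snd).neg).sub (hg.comp contDiff_fst))
  set γ : ℝ → ℝ × ℝ := fun z => (q z, deriv q z)
  have hγ : Continuous γ := hs.continuous.prodMk hs.continuous_deriv
  set K := γ '' Icc a b ∪ {(s₀, 0)}
  obtain ⟨L, hL⟩ := LocallyLipschitzOn.exists_lipschitzOnWith_of_compact
    ((isCompact_Icc.image hγ).union isCompact_singleton) hv.locallyLipschitz.locallyLipschitzOn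
  have hunique := ODE_solution_unique_of_mem_Icc_left (v := fun _ => v) (s := fun _ => K)
    (f := γ) (g := fun _ => (s₀, 0)) (fun _ _ => hL) hγ.continuousOn
    (fun t ht => ((hs.hasDerivAt t).prodMk
      (hs.hasDerivAt_deriv_of_pos (ha.trans_le ht.1.le))).hasDerivWithinAt)
    (fun t ht => Or.inl ⟨t, Ioc_subset_Icc_self ht, rfl⟩) continuousOn_const
    (fun t _ => by
      convert (hasDerivAt_const t (s₀, (0:ℝ))).hasDerivWithinAt using 1
      simp [v, hgs])
    (fun _ _ => Or.inr rfl) (by simp [γ, hqb, hdb])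
  exact congrArg Prod.fst (hunique ⟨le_rfl, hab⟩)

/-- `w = exp (c z / 2) q` satisfies `w'' = exp (c z / 2) (c² q / 4 - g q) ≤ -δ w` once `q` is
small, because `g s ≥ k s` near `0` for some `k > c² / 4`. -/
theorem not_tendsto_atTop_zero {d : ℝ} (hg0 : g 0 = 0) (hgd : HasDerivAt g d 0)
    (hcd : c ^ 2 < 4 * d) (hs : IsStationarySol g c q) (hpos : ∀ z, 0 < q z) :
    ¬ Tendsto q atTop (𝓝 0) := by
  intro hlim
  obtain ⟨k, hck, hkd⟩ := exists_between (show c ^ 2 / 4 < d by linarith)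
  have hgk : ∀ᶠ z in atTop, k * q z < g (q z) := by
    have hslope : ∀ᶠ s in 𝓝[>] 0, k < slope g 0 s :=
      (hasDerivAt_iff_tendsto_slope_left_right.1 hgd).2.eventually_const_lt (by linarith)
    filter_upwards [(tendsto_nhdsWithin_of_tendsto_nhds_of_eventually_within _ hlim
      (Eventually.of_forall hpos)).eventually hslope] with z hz
    rwa [slope_def_field, hg0, sub_zero, sub_zero, lt_div_iff₀ (hpos z)] at hz
  refine not_eventually_pos_of_deriv2_le_neg_mul (δ := k - c ^ 2 / 4)
    (w := fun z => Real.exp (c / 2 * z) * q z)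
    (W := fun z => Real.exp (c / 2 * z) * (c / 2 * q z + deriv q z))
    (W' := fun z => Real.exp (c / 2 * z) * (c ^ 2 / 4 * q z - g (q z))) (by linarith)
    (Eventually.of_forall fun z => ?_) ((eventually_gt_atTop 0).mono fun z hz => ?_)
    (hgk.mono fun z hz => ?_) (Eventually.of_forall fun z => mul_pos (Real.exp_pos _) (hpos z))
  · exact (((hasDerivAt_id' z).const_mul (c / 2)).exp.mul (hs.hasDerivAt z)).congr_deriv
      (by ring)
  · refine (((hasDerivAt_id' z).const_mul (c / 2)).exp.mul
      (((hs.hasDerivAt z).const_mul (c / 2)).add (hs.hasDerivAt_deriv_of_pos hz))).congr_deriv ?_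
    simp only [Pi.add_apply]
    ring
  · have := Real.exp_pos (c / 2 * z)
    nlinarith

theorem map_eq_zero_of_tendsto (hg : Continuous g) (hs : IsStationarySol g c q) {L : ℝ}
    (hL : Tendsto q atTop (𝓝 L)) : g L = 0 := by
  refine neg_eq_zero.1 (eq_zero_of_tendsto_of_deriv2_add_mul_tendsto (c := c)
    (Eventually.of_forall hs.hasDerivAt)
    ((eventually_gt_atTop 0).mono fun z hz => hs.hasDerivAt_deriv_of_pos hz) hL ?_)
  exact ((hg.tendsto L).comp hL).neg.congr fun z => by simp only [Function.comp]; ring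

/-- A next critical point `z₂` would have `q z₂ ∈ (0, 1)`, hence `q'' z₂ < 0`, while `q' < 0`
just before it. -/
theorem deriv_neg_of_deriv_eq_zero (hg : Monostable g) (hs : IsStationarySol g c q)
    (hpos : ∀ z, 0 < q z) {z₁ z : ℝ} (hz₁ : 0 < z₁) (hd₁ : deriv q z₁ = 0) (hq₁ : q z₁ < 1)
    (hz : z₁ < z) : deriv q z < 0 := by
  by_contra! hdz
  have hright : ∀ᶠ y in 𝓝[>] z₁, 0 < -deriv q y := by
    refine ((hs.hasDerivAt_deriv_of_pos hz₁).eventually_neg_nhdsGT hd₁ ?_).mono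
      fun y hy => neg_pos.2 hy
    rw [hd₁, mul_zero, neg_zero, zero_sub, neg_lt_zero]
    exact hg.pos_of_mem_Ioo (hpos z₁) hq₁
  obtain ⟨z₂, hz₂, hd₂, hneg⟩ :=
    exists_first_zero hs.continuous_deriv.neg hright hz (neg_nonpos.2 hdz)
  have hq₂ : q z₂ < q z₁ :=
    strictAntiOn_of_deriv_neg (convex_Icc z₁ z₂) hs.continuous.continuousOn
      (fun x hx => by rw [interior_Icc] at hx; exact neg_pos.1 (hneg x hx))
      (left_mem_Icc.2 hz₂.1.le) (right_mem_Icc.2 hz₂.1.le) hz₂.1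
  have hle := (hs.hasDerivAt_deriv_of_pos (hz₁.trans hz₂.1)).neg.nonpos_of_nonneg_left hd₂ hz₂.1
    fun y hy => (hneg y hy).le
  rw [neg_eq_zero.1 hd₂] at hle
  linarith [hg.pos_of_mem_Ioo (hpos z₂) (hq₂.trans hq₁)]

/-- From such a critical point on, `q` decreases to a zero of `g` in `[0, 1)`, that is to `0`. -/
theorem deriv_ne_zero_of_lt_one (hg : Monostable g) (hcd : c ^ 2 < 4 * deriv g 0)
    (hs : IsStationarySol g c q) (hpos : ∀ z, 0 < q z) {z₁ : ℝ} (hz₁ : 0 < z₁) (hq₁ : q z₁ < 1) :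
    deriv q z₁ ≠ 0 := by
  intro hd₁
  have hanti : AntitoneOn q (Ici z₁) :=
    antitoneOn_of_deriv_nonpos (convex_Ici z₁) hs.continuous.continuousOn
      hs.differentiable.differentiableOn fun x hx => by
        rw [interior_Ici] at hx
        exact (hs.deriv_neg_of_deriv_eq_zero hg hpos hz₁ hd₁ hq₁ hx).le
  obtain ⟨L, hL⟩ := hanti.exists_tendsto_atTop ⟨0, by rintro _ ⟨x, -, rfl⟩; exact (hpos x).le⟩
  have hL0 : 0 ≤ L := ge_of_tendsto hL (Eventually.of_forall fun z => (hpos z).le)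
  have hL1 : L < 1 := by
    refine (le_of_tendsto hL ?_).trans_lt hq₁
    filter_upwards [eventually_ge_atTop z₁] with x hx using hanti self_mem_Ici hx hx
  rcases hg.eq_zero_or_eq_one hL0 (hs.map_eq_zero_of_tendsto hg.contDiff.continuous hL) with
    rfl | rfl
  · exact hs.not_tendsto_atTop_zero hg.map_zero
      (hg.contDiff.differentiable one_ne_zero 0).hasDerivAt hcd hpos hL
  · exact hL1.false

theorem deriv_pos (hg : Monostable g) (hcd : c ^ 2 < 4 * deriv g 0) (hs : IsStationarySol g c q)
    (hpos : ∀ z, 0 < q z) (z : ℝ) : 0 < deriv q z := by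
  have hleft : ∀ z ≤ 0, 0 < deriv q z := fun z hz =>
    hs.deriv_eq_leftRate_mul hz ▸ mul_pos (leftRate_pos c) (hpos z)
  rcases le_or_gt z 0 with hz | hz
  · exact hleft z hz
  by_contra! hdz
  have h0 : ∀ᶠ y in 𝓝[>] 0, 0 < deriv q y :=
    eventually_nhdsWithin_of_eventually_nhds
      (continuousAt_const.eventually_lt hs.continuous_deriv.continuousAt (hleft 0 le_rfl))
  obtain ⟨z₁, hz₁, hd₁, hposd⟩ := exists_first_zero hs.continuous_deriv h0 hz hdz
  have hq₁ : q z₁ ≤ 1 := by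
    by_contra! h1
    have := (hs.hasDerivAt_deriv_of_pos hz₁.1).nonpos_of_nonneg_left hd₁ hz₁.1
      fun y hy => (hposd y hy).le
    rw [hd₁] at this
    linarith [hg.neg_of_one_lt h1]
  rcases hq₁.lt_or_eq with hq₁ | hq₁
  · exact hs.deriv_ne_zero_of_lt_one hg hcd hpos hz₁.1 hq₁ hd₁
  · -- `q` would then be identically `1` before `z₁`, although it increases on `[0, z₁]`
    have h1 := hs.eq_of_eq_of_deriv_eq_zero hg.contDiff hg.map_one (half_pos hz₁.1)
      (half_le_self hz₁.1.le) hq₁ hd₁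
    have := strictMonoOn_of_deriv_pos (convex_Icc 0 z₁) hs.continuous.continuousOn
      (fun x hx => by rw [interior_Icc] at hx; exact hposd x hx)
      ⟨(half_pos hz₁.1).le, half_le_self hz₁.1.le⟩ ⟨hz₁.1.le, le_rfl⟩ (half_lt_self hz₁.1)
    linarith

theorem strictMono (hg : Monostable g) (hcd : c ^ 2 < 4 * deriv g 0) (hs : IsStationarySol g c q)
    (hpos : ∀ z, 0 < q z) : StrictMono q :=
  strictMono_of_deriv_pos (hs.deriv_pos hg hcd hpos)

theorem tendsto_atTop_one (hg : Monostable g) (hcd : c ^ 2 < 4 * deriv g 0)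
    (hs : IsStationarySol g c q) (hpos : ∀ z, 0 < q z) : Tendsto q atTop (𝓝 1) := by
  obtain ⟨M, hM⟩ := hs.1
  have hbdd : BddAbove (range q) := ⟨M, by rintro _ ⟨z, rfl⟩; exact (le_abs_self _).trans (hM z)⟩
  have hlim := tendsto_atTop_ciSup (hs.strictMono hg hcd hpos).monotone hbdd
  have hL : 0 < ⨆ z, q z := (hpos 0).trans_le (le_ciSup hbdd 0)
  rcases hg.eq_zero_or_eq_one hL.le (hs.map_eq_zero_of_tendsto hg.contDiff.continuous hlim) with
    h | h
  · exact absurd h hL.ne'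
  · rwa [h] at hlim

theorem lt_one (hg : Monostable g) (hcd : c ^ 2 < 4 * deriv g 0) (hs : IsStationarySol g c q)
    (hpos : ∀ z, 0 < q z) (z : ℝ) : q z < 1 :=
  ((hs.strictMono hg hcd hpos).lt_iff_lt.2 (lt_add_one z)).trans_le
    ((hs.strictMono hg hcd hpos).monotone.ge_of_tendsto (hs.tendsto_atTop_one hg hcd hpos) _)

theorem Ioo_subset_range (hg : Monostable g) (hcd : c ^ 2 < 4 * deriv g 0)
    (hs : IsStationarySol g c q) (hpos : ∀ z, 0 < q z) : Ioo 0 1 ⊆ range q := fun _ hy =>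
  mem_range_of_exists_le_of_exists_ge hs.continuous
    ((hs.tendsto_atBot_zero.eventually_lt_const hy.1).exists.imp fun _ => le_of_lt)
    (((hs.tendsto_atTop_one hg hcd hpos).eventually_const_lt hy.2).exists.imp fun _ => le_of_lt)

/-- For `z > 0`, `q'' = -c q' - g(q) < 0`, so `q'` decreases and, by the mean value theorem,
`q' z ≤ q z - q (z - 1)`. -/
theorem tendsto_deriv_atTop_zero (hg : Monostable g) (hc0 : 0 ≤ c) (hcd : c ^ 2 < 4 * deriv g 0)
    (hs : IsStationarySol g c q) (hpos : ∀ z, 0 < q z) : Tendsto (deriv q) atTop (𝓝 0) := by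
  have hanti : AntitoneOn (deriv q) (Ioi 0) :=
    antitoneOn_of_hasDerivWithinAt_nonpos (convex_Ioi 0) hs.continuous_deriv.continuousOn
      (fun x hx => (hs.hasDerivAt_deriv_of_pos (interior_subset hx)).hasDerivWithinAt)
      fun x hx => by
        have := hg.pos_of_mem_Ioo (hpos x) (hs.lt_one hg hcd hpos x)
        nlinarith [mul_nonneg hc0 (hs.deriv_pos hg hcd hpos x).le]
  have hlim := hs.tendsto_atTop_one hg hcd hpos
  have hdiff : Tendsto (fun z => q z - q (z - 1)) atTop (𝓝 0) := by
    simpa [sub_eq_add_neg] using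
      hlim.sub (hlim.comp (tendsto_atTop_add_const_right _ (-1) tendsto_id))
  refine tendsto_of_tendsto_of_tendsto_of_le_of_le' tendsto_const_nhds hdiff
    (Eventually.of_forall fun z => (hs.deriv_pos hg hcd hpos z).le) ?_
  filter_upwards [eventually_gt_atTop 1] with z hz
  obtain ⟨ξ, hξ, hξd⟩ := exists_deriv_eq_slope q (sub_one_lt z) hs.continuous.continuousOn
    hs.differentiable.differentiableOn
  rw [sub_sub_cancel, div_one] at hξd
  exact hξd ▸ hanti (show 0 < ξ by linarith [hξ.1]) (show 0 < z by linarith) hξ.2.le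

theorem deriv_div_strictAntiOn (hg : Monostable g) (hc0 : 0 ≤ c) (hcd : c ^ 2 < 4 * deriv g 0)
    (hs : IsStationarySol g c q) (hpos : ∀ z, 0 < q z) :
    StrictAntiOn (fun z => deriv q z / q z) (Ici 0) := by
  refine strictAntiOn_of_deriv_neg (convex_Ici 0)
    (hs.continuous_deriv.div hs.continuous fun z => (hpos z).ne').continuousOn fun x hx => ?_
  rw [interior_Ici] at hx
  rw [show (fun z => deriv q z / q z) = deriv q / q from rfl,
    ((hs.hasDerivAt_deriv_of_pos hx).div (hs.hasDerivAt x) (hpos x).ne').deriv]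
  have hgx := hg.pos_of_mem_Ioo (hpos x) (hs.lt_one hg hcd hpos x)
  have hdx := hs.deriv_pos hg hcd hpos x
  refine div_neg_of_neg_of_pos ?_ (pow_pos (hpos x) 2)
  nlinarith [mul_nonneg (mul_nonneg hc0 hdx.le) (hpos x).le, mul_pos hgx (hpos x), mul_pos hdx hdx]

/-- The phase-plane gap `η = q' ∘ σ - p'` solves `η' = g(p) / q'(σ) · η` on `z > 0` and tends
to `0` at `+∞`, so it vanishes. -/
theorem deriv_comp_eq_deriv (hg : Monostable g) (hc0 : 0 ≤ c) (hcd : c ^ 2 < 4 * deriv g 0)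
    (hq : IsStationarySol g c q) (hqpos : ∀ z, 0 < q z) (hp : IsStationarySol g c p)
    (hppos : ∀ z, 0 < p z) {σ : ℝ → ℝ} (hσ : ∀ z, q (σ z) = p z)
    (hσd : ∀ z, HasDerivAt σ (deriv p z / deriv q (σ z)) z) (hσ0 : 0 ≤ σ 0) {z : ℝ}
    (hz : 0 ≤ z) : deriv q (σ z) = deriv p z := by
  have hqmono := hq.strictMono hg hcd hqpos
  have hσpos : ∀ z, 0 < z → 0 < σ z := fun z hz =>
    hσ0.trans_lt (hqmono.lt_iff_lt.1 (by rw [hσ, hσ]; exact hp.strictMono hg hcd hppos hz))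
  have hσtop : Tendsto σ atTop atTop := tendsto_atTop.2 fun R =>
    ((hp.tendsto_atTop_one hg hcd hppos).eventually_const_lt (hq.lt_one hg hcd hqpos R)).mono
      fun z hz => (hqmono.lt_iff_lt.1 (by rwa [hσ])).le
  set η := fun z => deriv q (σ z) - deriv p z
  have hηlim : Tendsto η atTop (𝓝 0) := by
    simpa using ((hq.tendsto_deriv_atTop_zero hg hc0 hcd hqpos).comp hσtop).sub
      (hp.tendsto_deriv_atTop_zero hg hc0 hcd hppos)
  have hηd : ∀ z, 0 < z → HasDerivAt η (g (p z) / deriv q (σ z) * η z) z := by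
    intro z hz
    refine (((hq.hasDerivAt_deriv_of_pos (hσpos z hz)).comp z (hσd z)).sub
      (hp.hasDerivAt_deriv_of_pos hz)).congr_deriv ?_
    have := (hq.deriv_pos hg hcd hqpos (σ z)).ne'
    rw [hσ z]
    field_simp
    ring
  have hη : ∀ z, 0 < z → η z = 0 := fun z hz =>
    eq_zero_of_hasDerivAt_mul_self (fun x hx => div_nonneg
      (hg.pos_of_mem_Ioo (hppos x) (hp.lt_one hg hcd hppos x)).le
      (hq.deriv_pos hg hcd hqpos (σ x)).le) hηd hηlim hz
  have hηc : Continuous η := (hq.continuous_deriv.comp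
    (continuous_iff_continuousAt.2 fun z => (hσd z).continuousAt)).sub hp.continuous_deriv
  have hclosed : Ici (0:ℝ) ⊆ {z | η z = 0} :=
    closure_Ioi (0:ℝ) ▸ (isClosed_eq hηc continuous_const).closure_subset_iff.2 hη
  exact sub_eq_zero.1 (hclosed hz)

theorem eq_of_apply_zero_le (hg : Monostable g) (hc0 : 0 ≤ c) (hcd : c ^ 2 < 4 * deriv g 0)
    (hq : IsStationarySol g c q) (hqpos : ∀ z, 0 < q z) (hp : IsStationarySol g c p)
    (hppos : ∀ z, 0 < p z) (hle : q 0 ≤ p 0) : q = p := by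
  have hqmono := hq.strictMono hg hcd hqpos
  obtain ⟨σ, hσ, hσd⟩ := hqmono.exists_hasDerivAt_comp_eq hq.hasDerivAt
    (fun x => (hq.deriv_pos hg hcd hqpos x).ne') isOpen_Ioo (hq.Ioo_subset_range hg hcd hqpos)
    hp.hasDerivAt fun z => ⟨hppos z, hp.lt_one hg hcd hppos z⟩
  have hσ0 : 0 ≤ σ 0 := hqmono.le_iff_le.1 (by rwa [hσ])
  have hderiv : ∀ z, 0 ≤ z → deriv q (σ z) = deriv p z := fun z hz =>
    hq.deriv_comp_eq_deriv hg hc0 hcd hqpos hp hppos hσ hσd hσ0 hz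
  -- both `q` and `p` leave `-∞` along `q' = μ q`, while `q' / q` decreases strictly on `z ≥ 0`
  have hσ00 : σ 0 = 0 := by
    refine hσ0.antisymm' (not_lt.1 fun hlt => ?_)
    have : deriv q (σ 0) / q (σ 0) < deriv q 0 / q 0 :=
      hq.deriv_div_strictAntiOn hg hc0 hcd hqpos self_mem_Ici hσ0 hlt
    rw [hderiv 0 le_rfl, hσ, hq.deriv_eq_leftRate_mul le_rfl, hp.deriv_eq_leftRate_mul le_rfl,
      mul_div_cancel_right₀ _ (hppos 0).ne', mul_div_cancel_right₀ _ (hqpos 0).ne'] at this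
    exact this.false
  have hσid : ∀ z, 0 ≤ z → σ z = z := by
    intro z hz
    have := constant_of_has_deriv_right_zero (f := fun z => σ z - z)
      ((continuous_iff_continuousAt.2 fun z => (hσd z).continuousAt).sub continuous_id).continuousOn
      (fun x hx => by
        have := (hσd x).sub (hasDerivAt_id x)
        rw [← hderiv x hx.1, div_self (hq.deriv_pos hg hcd hqpos _).ne', sub_self] at this
        exact this.hasDerivWithinAt) z (right_mem_Icc.2 hz)
    simp only [hσ00, sub_zero] at this
    linarith
  have h0 : q 0 = p 0 := by rw [← hσ, hσ00]
  funext z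
  rcases le_or_gt z 0 with hz | hz
  · rw [hq.eq_mul_exp_leftRate hz, hp.eq_mul_exp_leftRate hz, h0]
  · rw [← hσ, hσid z hz.le]

end IsStationarySol

/-- If `0 ≤ c < 2√(g'(0))`, the invasion state is the unique positive
bounded stationary solution; in particular there is no ground state. -/
theorem uniqueness_below_linear_speed (g : ℝ → ℝ) (hg : Monostable g)
    (c : ℝ) (hc0 : 0 ≤ c) (hc : c < 2 * Real.sqrt (deriv g 0))
    (pplus : ℝ → ℝ) (hp : IsInvasionState g c pplus) :
    (∀ q : ℝ → ℝ, IsStationarySol g c q → (∀ z, 0 < q z) → q = pplus) ∧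
    ¬ ∃ q : ℝ → ℝ, IsGroundState g c q := by
  obtain ⟨hsp, hppos, -, -⟩ := hp
  have hcd : c ^ 2 < 4 * deriv g 0 := by
    have := (Real.lt_sqrt (by linarith : 0 ≤ c / 2)).1 (by linarith : c / 2 < √(deriv g 0))
    linarith
  refine ⟨fun q hsq hqpos => ?_, ?_⟩
  · rcases le_total (q 0) (pplus 0) with h | h
    · exact hsq.eq_of_apply_zero_le hg hc0 hcd hqpos hsp hppos h
    · exact (hsp.eq_of_apply_zero_le hg hc0 hcd hppos hsq hqpos h).symm
  · rintro ⟨q, hsq, hqpos, -, hlim⟩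
    exact zero_ne_one (tendsto_nhds_unique hlim (hsq.tendsto_atTop_one hg hcd hqpos))
end
end

section
/- Let c ≥ 0 and 0 < δ < 1. Then there exists a finite constant K_δ > 0 such that for every θ ∈ (0, 1−δ], the solution φ of the ODE φ'' + cφ' + g(φ) = 0 on ℝ with φ(0) = θ and φ'(0) = 0 admits a point z_θ ∈ [−K_δ, 0) with φ(z_θ) = 0 < φ'(z_θ) and φ(z) > 0 for all z ∈ (z_θ, 0]. In particular sup_{θ∈(0,1−δ]} |z_θ| ≤ K_δ < +∞. -/
open Filter Topology MeasureTheory Set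

noncomputable section

/-!
The energy `½ φ'² + G(φ)`, `G' = g`, is nonincreasing when `c ≥ 0`, so to the left of `0` it stays
above `G(θ)`. As long as `0 < φ < 1`, the quantity `φ' e^{cz}` is strictly decreasing, hence `φ`
is increasing on `(z_θ, 0]`. Since `g(s) ≥ κ s` on `[0, 1 - δ]` for some `κ > 0`, the energy bound
gives `φ'² ≥ κ (θ² - φ²)`, i.e. `arcsin (φ / θ)` grows at rate at least `√κ`; as `arcsin` takes
values in an interval of length `π`, `φ` must vanish within distance `2π / √κ` of `0`.
-/

lemma exists_pos_mul_le_of_deriv_pos {g : ℝ → ℝ} {b : ℝ} (hgc : Continuous g) (hg0 : g 0 = 0)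
    (hg'0 : 0 < deriv g 0) (hpos : ∀ s ∈ Ioc 0 b, 0 < g s) :
    ∃ κ > 0, ∀ s ∈ Icc 0 b, κ * s ≤ g s := by
  have hslope : Continuous (dslope g 0) := continuousOn_univ.1 <|
    (continuousOn_dslope univ_mem).2 ⟨hgc.continuousOn, differentiableAt_of_deriv_ne_zero hg'0.ne'⟩
  have hslope_pos : ∀ s ∈ Icc 0 b, 0 < dslope g 0 s := by
    rintro s ⟨hs0, hsb⟩
    rcases hs0.eq_or_lt with rfl | hs0
    · rwa [dslope_same]
    · rw [dslope_of_ne g hs0.ne', slope_def_field, hg0, sub_zero, sub_zero]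
      exact div_pos (hpos s ⟨hs0, hsb⟩) hs0
  obtain ⟨κ, hκ, hκle⟩ :=
    isCompact_Icc.exists_forall_le' (a := (0 : ℝ)) hslope.continuousOn hslope_pos
  refine ⟨κ, hκ, fun s hs => ?_⟩
  have hg : s * dslope g 0 s = g s := by simpa [hg0] using sub_smul_dslope g 0 s
  rw [← hg, mul_comm]
  exact mul_le_mul_of_nonneg_left (hκle s hs) hs.1

lemma mul_sub_le_arcsin_sub {u u' : ℝ → ℝ} {k a b : ℝ} (hab : a ≤ b)
    (hu : ContinuousOn u (Icc a b)) (hu' : ∀ y ∈ Ioo a b, HasDerivAt u (u' y) y)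
    (hu1 : ∀ y ∈ Ioo a b, u y ∈ Ioo (-1) 1) (hk : ∀ y ∈ Ioo a b, k * √(1 - u y ^ 2) ≤ u' y) :
    k * (b - a) ≤ Real.arcsin (u b) - Real.arcsin (u a) := by
  have hmono : MonotoneOn (fun y => Real.arcsin (u y) - k * y) (Icc a b) := by
    refine monotoneOn_of_hasDerivWithinAt_nonneg (convex_Icc a b)
      ((Real.continuous_arcsin.comp_continuousOn hu).sub (continuousOn_const.mul continuousOn_id))
      (f' := fun y => 1 / √(1 - u y ^ 2) * u' y - k) (fun y hy => ?_) (fun y hy => ?_) <;>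
      rw [interior_Icc] at hy
    · have harcsin := Real.hasDerivAt_arcsin (hu1 y hy).1.ne' (hu1 y hy).2.ne
      exact ((harcsin.comp y (hu' y hy)).sub ((hasDerivAt_id y).const_mul k)
        |>.congr_deriv (by simp)).hasDerivWithinAt
    · have hsqrt : 0 < √(1 - u y ^ 2) := by
        have := hu1 y hy
        exact Real.sqrt_pos.2 (by nlinarith [this.1, this.2])
      rw [sub_nonneg, one_div_mul_eq_div, le_div_iff₀ hsqrt]
      exact hk y hy
  have := hmono (left_mem_Icc.2 hab) (right_mem_Icc.2 hab) hab
  simp only at this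
  linarith

structure IsProfileSol (g : ℝ → ℝ) (c : ℝ) (φ : ℝ → ℝ) : Prop where
  contDiff : ContDiff ℝ 1 φ
  differentiable_deriv : Differentiable ℝ (deriv φ)
  ode : ∀ z, deriv (deriv φ) z + c * deriv φ z + g (φ z) = 0

namespace IsProfileSol

variable {g : ℝ → ℝ} {c : ℝ} {φ : ℝ → ℝ} {a b : ℝ}

lemma hasDerivAt_deriv_mul_exp (hφ : IsProfileSol g c φ) (y : ℝ) :
    HasDerivAt (fun y => deriv φ y * Real.exp (c * y)) (-g (φ y) * Real.exp (c * y)) y := by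
  have hexp : HasDerivAt (fun y => Real.exp (c * y)) (Real.exp (c * y) * c) y := by
    simpa using ((hasDerivAt_id y).const_mul c).exp
  refine ((hφ.differentiable_deriv y).hasDerivAt.mul hexp).congr_deriv ?_
  linear_combination Real.exp (c * y) * hφ.ode y

lemma energy_antitone (hφ : IsProfileSol g c φ) (hc : 0 ≤ c) (hgc : Continuous g) :
    Antitone fun y => deriv φ y ^ 2 / 2 + ∫ t in (0 : ℝ)..φ y, g t := by
  have hE : ∀ y, HasDerivAt (fun y => deriv φ y ^ 2 / 2 + ∫ t in (0 : ℝ)..φ y, g t)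
      (-c * deriv φ y ^ 2) y := fun y => by
    have hG := (hgc.integral_hasStrictDerivAt 0 (φ y)).hasDerivAt.comp y
      (hφ.contDiff.differentiable one_ne_zero y).hasDerivAt
    refine ((((hφ.differentiable_deriv y).hasDerivAt.pow 2).div_const 2).add hG).congr_deriv ?_
    linear_combination deriv φ y * hφ.ode y
  refine antitone_of_deriv_nonpos (fun y => (hE y).differentiableAt) fun y => ?_
  rw [(hE y).deriv]
  nlinarith [sq_nonneg (deriv φ y)]

lemma mul_sq_sub_sq_le_sq_deriv (hφ : IsProfileSol g c φ) (hc : 0 ≤ c) (hgc : Continuous g)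
    {κ y : ℝ} (hb : deriv φ b = 0) (hyb : y ≤ b) (hφyb : φ y ≤ φ b)
    (hgκ : ∀ s ∈ Icc (φ y) (φ b), κ * s ≤ g s) :
    κ * (φ b ^ 2 - φ y ^ 2) ≤ deriv φ y ^ 2 := by
  have henergy := hφ.energy_antitone hc hgc hyb
  simp only [hb] at henergy
  have hG : ∫ t in φ y..φ b, κ * t ≤ ∫ t in φ y..φ b, g t :=
    intervalIntegral.integral_mono_on hφyb
      ((continuous_const.mul continuous_id).intervalIntegrable _ _) (hgc.intervalIntegrable _ _) hgκ
  rw [intervalIntegral.integral_const_mul, integral_id,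
    ← intervalIntegral.integral_interval_sub_left (hgc.intervalIntegrable 0 _)
      (hgc.intervalIntegrable 0 _)] at hG
  linarith

lemma deriv_pos_of_reaction_pos (hφ : IsProfileSol g c φ) (hb : deriv φ b = 0)
    (hreact : ∀ y ∈ Ioo a b, 0 < g (φ y)) : ∀ y ∈ Ico a b, 0 < deriv φ y := by
  have hanti : StrictAntiOn (fun y => deriv φ y * Real.exp (c * y)) (Icc a b) := by
    refine strictAntiOn_of_hasDerivWithinAt_neg (convex_Icc a b)
      (fun y _ => (hφ.hasDerivAt_deriv_mul_exp y).continuousAt.continuousWithinAt)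
      (fun y _ => (hφ.hasDerivAt_deriv_mul_exp y).hasDerivWithinAt) fun y hy => ?_
    rw [interior_Icc] at hy
    nlinarith [hreact y hy, Real.exp_pos (c * y)]
  intro y hy
  have := hanti ⟨hy.1, hy.2.le⟩ ⟨hy.1.trans hy.2.le, le_rfl⟩ hy.2
  simp only [hb, zero_mul] at this
  exact pos_of_mul_pos_left this (Real.exp_pos _).le

lemma strictMonoOn_of_deriv_pos_Ico (hφ : IsProfileSol g c φ)
    (hpos : ∀ y ∈ Ico a b, 0 < deriv φ y) : StrictMonoOn φ (Icc a b) :=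
  strictMonoOn_of_deriv_pos (convex_Icc a b) hφ.contDiff.continuous.continuousOn fun y hy => by
    rw [interior_Icc] at hy
    exact hpos y (Ioo_subset_Ico_self hy)

lemma lt_one_of_pos (hφ : IsProfileSol g c φ) (hg01 : ∀ s ∈ Ioo 0 1, 0 < g s)
    (hb : deriv φ b = 0) (hφb : φ b < 1) (hpos : ∀ y ∈ Ioc a b, 0 < φ y) :
    ∀ y ∈ Ioc a b, φ y < 1 := by
  intro y₀ hy₀
  by_contra! hy₀1
  -- at the last point `w` of `[y₀, b]` with `φ w ≥ 1`, `φ` would increase on `[w, b]`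
  obtain ⟨w, ⟨⟨hy₀w, hwb⟩, hw1⟩, hwmax⟩ :=
    (isCompact_Icc.inter_right
      (isClosed_le continuous_const hφ.contDiff.continuous)).exists_isGreatest
      (⟨y₀, ⟨le_rfl, hy₀.2⟩, hy₀1⟩ : (Icc y₀ b ∩ {y | 1 ≤ φ y}).Nonempty)
  replace hw1 : 1 ≤ φ w := hw1
  have hwb' : w < b := hwb.lt_of_ne fun h => by rw [h] at hw1; linarith
  have hreact : ∀ y ∈ Ioo w b, 0 < g (φ y) := fun y hy => by
    refine hg01 _ ⟨hpos y ⟨hy₀.1.trans_le (hy₀w.trans hy.1.le), hy.2.le⟩, ?_⟩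
    by_contra! hy1
    exact hy.1.not_ge (hwmax ⟨⟨hy₀w.trans hy.1.le, hy.2.le⟩, hy1⟩)
  have := hφ.strictMonoOn_of_deriv_pos_Ico (hφ.deriv_pos_of_reaction_pos hb hreact)
    (left_mem_Icc.2 hwb) (right_mem_Icc.2 hwb) hwb'
  linarith

lemma deriv_pos_of_pos (hφ : IsProfileSol g c φ) (hg01 : ∀ s ∈ Ioo 0 1, 0 < g s)
    (hb : deriv φ b = 0) (hφb : φ b < 1) (hpos : ∀ y ∈ Ioc a b, 0 < φ y) :
    ∀ y ∈ Ico a b, 0 < deriv φ y :=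
  hφ.deriv_pos_of_reaction_pos hb fun y hy =>
    hg01 _ ⟨hpos y (Ioo_subset_Ioc_self hy),
      hφ.lt_one_of_pos hg01 hb hφb hpos y (Ioo_subset_Ioc_self hy)⟩

lemma exists_nonpos_of_deriv_eq_zero (hφ : IsProfileSol g c φ) (hc : 0 ≤ c) (hgc : Continuous g)
    (hg01 : ∀ s ∈ Ioo 0 1, 0 < g s) {κ : ℝ} (hκ : 0 < κ) (hgκ : ∀ s ∈ Icc 0 (φ b), κ * s ≤ g s)
    (hb : deriv φ b = 0) (hφb0 : 0 < φ b) (hφb1 : φ b < 1) :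
    ∃ y ∈ Icc (b - 2 * Real.pi / √κ) b, φ y ≤ 0 := by
  by_contra! hpos
  set a := b - 2 * Real.pi / √κ
  have hlen : √κ * (b - a) = 2 * Real.pi := by
    simp only [a, sub_sub_cancel]
    field_simp
  have hab : a ≤ b := sub_le_self _ (by positivity)
  have hderiv := hφ.deriv_pos_of_pos hg01 hb hφb1 fun y hy => hpos y (Ioc_subset_Icc_self hy)
  have hmono := hφ.strictMonoOn_of_deriv_pos_Ico hderiv
  have hlt : ∀ y ∈ Ioo a b, φ y < φ b := fun y hy =>
    hmono (Ioo_subset_Icc_self hy) (right_mem_Icc.2 hab) hy.2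
  have hcomp := mul_sub_le_arcsin_sub (u := fun y => φ y / φ b) (u' := fun y => deriv φ y / φ b)
    (k := √κ) hab (hφ.contDiff.continuous.div_const _).continuousOn
    (fun y _ => (hφ.contDiff.differentiable one_ne_zero y).hasDerivAt.div_const _)
    (fun y hy => ⟨by linarith [div_pos (hpos y (Ioo_subset_Icc_self hy)) hφb0],
      (div_lt_one hφb0).2 (hlt y hy)⟩)
    fun y hy => by
      have hy0 := hpos y (Ioo_subset_Icc_self hy)
      have hsq := hφ.mul_sq_sub_sq_le_sq_deriv hc hgc hb hy.2.le (hlt y hy).le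
        fun s hs => hgκ s ⟨hy0.le.trans hs.1, hs.2⟩
      rw [← Real.sqrt_mul hκ.le,
        Real.sqrt_le_left (div_nonneg (hderiv y ⟨hy.1.le, hy.2⟩).le hφb0.le), div_pow, div_pow,
        le_div_iff₀ (by positivity)]
      calc κ * (1 - φ y ^ 2 / φ b ^ 2) * φ b ^ 2 = κ * (φ b ^ 2 - φ y ^ 2) := by field_simp
        _ ≤ deriv φ y ^ 2 := hsq
  linarith [Real.arcsin_le_pi_div_two (φ b / φ b), Real.neg_pi_div_two_le_arcsin (φ a / φ b),
    Real.pi_pos]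

lemma exists_first_zero (hφ : IsProfileSol g c φ) (hg01 : ∀ s ∈ Ioo 0 1, 0 < g s)
    (hb : deriv φ b = 0) (hφb0 : 0 < φ b) (hφb1 : φ b < 1) (hab : a ≤ b) (ha : φ a ≤ 0) :
    ∃ z, a ≤ z ∧ z < b ∧ φ z = 0 ∧ 0 < deriv φ z ∧ ∀ y, z < y → y ≤ b → 0 < φ y := by
  obtain ⟨z, ⟨⟨haz, hzb⟩, hz0⟩, hzmax⟩ :=
    (isCompact_Icc.inter_right
      (isClosed_le hφ.contDiff.continuous continuous_const)).exists_isGreatest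
      (⟨a, ⟨le_rfl, hab⟩, ha⟩ : (Icc a b ∩ {y | φ y ≤ 0}).Nonempty)
  replace hz0 : φ z ≤ 0 := hz0
  have hpos : ∀ y ∈ Ioc z b, 0 < φ y := fun y hy => by
    by_contra! hy0
    exact hy.1.not_ge (hzmax ⟨⟨haz.trans hy.1.le, hy.2⟩, hy0⟩)
  have hzb' : z < b := hzb.lt_of_ne fun h => by rw [h] at hz0; linarith
  obtain ⟨y, hy, hy0⟩ :=
    intermediate_value_Icc hzb hφ.contDiff.continuous.continuousOn ⟨hz0, hφb0.le⟩
  obtain rfl : z = y := hy.1.eq_or_lt.resolve_right fun hzy => (hpos y ⟨hzy, hy.2⟩).ne' hy0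
  exact ⟨z, haz, hzb', hy0, hφ.deriv_pos_of_pos hg01 hb hφb1 hpos z ⟨le_rfl, hzb'⟩,
    fun x hx hxb => hpos x ⟨hx, hxb⟩⟩

end IsProfileSol

theorem uniform_bound_on_first_zero_general (g : ℝ → ℝ) (hg : Monostable g)
    (c δ : ℝ) (hc : 0 ≤ c) (hδ0 : 0 < δ) :
    ∃ K : ℝ, 0 < K ∧
      ∀ θ : ℝ, 0 < θ → θ ≤ 1 - δ →
        ∀ φ : ℝ → ℝ, ContDiff ℝ 1 φ →
          (∀ z : ℝ, DifferentiableAt ℝ (deriv φ) z) →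
          (∀ z : ℝ, deriv (deriv φ) z + c * deriv φ z + g (φ z) = 0) →
          φ 0 = θ → deriv φ 0 = 0 →
          ∃ zθ : ℝ, -K ≤ zθ ∧ zθ < 0 ∧ φ zθ = 0 ∧ 0 < deriv φ zθ ∧
            ∀ z : ℝ, zθ < z → z ≤ 0 → 0 < φ z := by
  obtain ⟨hgC, -, hg0, -, hgpos, -, -, hg'0⟩ := hg
  have hg01 : ∀ s ∈ Ioo 0 1, 0 < g s := fun s hs => hgpos s hs.1 hs.2
  obtain ⟨κ, hκ, hgκ⟩ := exists_pos_mul_le_of_deriv_pos (b := 1 - δ) hgC.continuous hg0 hg'0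
    fun s hs => hg01 s ⟨hs.1, by linarith [hs.2]⟩
  refine ⟨2 * Real.pi / √κ, by positivity, fun θ hθ hθδ φ hφC hφ' hode hφ0 hd0 => ?_⟩
  have hφ : IsProfileSol g c φ := ⟨hφC, hφ', hode⟩
  subst hφ0
  obtain ⟨y, hy, hy0⟩ := hφ.exists_nonpos_of_deriv_eq_zero hc hgC.continuous hg01 hκ
    (fun s hs => hgκ s ⟨hs.1, hs.2.trans hθδ⟩) hd0 hθ (by linarith)
  obtain ⟨z, hyz, hz⟩ := hφ.exists_first_zero hg01 hd0 hθ (by linarith) hy.2 hy0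
  exact ⟨z, by linarith [hy.1], hz⟩

/-- For `c ≥ 0` and `0 < δ < 1` there is `K_δ > 0` such that, for every
`θ ∈ (0, 1−δ]`, the solution `φ` of `φ'' + cφ' + g(φ) = 0` with `φ(0) = θ`, `φ'(0) = 0`
has a zero `z_θ ∈ [−K_δ, 0)` with `φ'(z_θ) > 0` and `φ > 0` on `(z_θ, 0]`. -/
theorem uniform_bound_on_first_zero (g : ℝ → ℝ) (hg : Monostable g)
    (c δ : ℝ) (hc : 0 ≤ c) (hδ0 : 0 < δ) (hδ1 : δ < 1) :
    ∃ K : ℝ, 0 < K ∧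
      ∀ θ : ℝ, 0 < θ → θ ≤ 1 - δ →
        ∀ φ : ℝ → ℝ, ContDiff ℝ 1 φ →
          (∀ z : ℝ, DifferentiableAt ℝ (deriv φ) z) →
          (∀ z : ℝ, deriv (deriv φ) z + c * deriv φ z + g (φ z) = 0) →
          φ 0 = θ → deriv φ 0 = 0 →
          ∃ zθ : ℝ, -K ≤ zθ ∧ zθ < 0 ∧ φ zθ = 0 ∧ 0 < deriv φ zθ ∧
            ∀ z : ℝ, zθ < z → z ≤ 0 → 0 < φ z :=
  uniform_bound_on_first_zero_general g hg c δ hc hδ0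
end
end
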